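/- For the genus-3 Lefschetz fibration X → S^2 from the 7-chain relation (t_{c_1}⋯t_{c_7})^8 = t_{δ_1} t_{δ_2} (56 nonseparating vanishing cycles), e(X) = (2)(2 − 6) + 56 = 48 and σ(X) = 7·8·(−4/7) = −32. The quadratic form on H_1(Σ_3; Z/2) with q(x_1) = q(x_3) = q(y_1) = q(y_2) = q(y_3) = 1 and q(x_2) = 0 evaluates to 1 on all seven chain classes [c_1] = x_1, [c_2] = y_1, [c_3] = x_1 + x_2, [c_4] = y_2, [c_5] = x_2 + x_3, [c_6] = y_3, [c_7] = x_3 (with appropriate chain classes), hence X minus a regular fiber is spin. -/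
import Mathlib


/-- The genus-3 Lefschetz fibration from the 7-chain relation
`(t_{c₁}⋯t_{c₇})⁸ = t_{δ₁}t_{δ₂}` (56 nonseparating vanishing cycles) has
`e = 2(2-6) + 56 = 48` and `σ = 7·8·(-4/7) = -32`; moreover the quadratic
form on `H₁(Σ₃; Z/2)` with `q(x₁) = q(x₃) = q(y₁) = q(y₂) = q(y₃) = 1`,
`q(x₂) = 0` evaluates to `1` on all seven chain classes
`x₁, y₁, x₁+x₂, y₂, x₂+x₃, y₃, x₃` (hence `X` minus a regular fiber is
spin). -/
theorem stmt_16 (e σ : ℤ)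
    (he : e = 2 * (2 - 2 * 3) + 56)
    (hσ : (σ : ℚ) = 7 * 8 * (-4 / 7))
    {V : Type*} [AddCommGroup V] [Module (ZMod 2) V]
    (B : V →ₗ[ZMod 2] V →ₗ[ZMod 2] ZMod 2)
    (q : V → ZMod 2)
    (hq : ∀ a b : V, q (a + b) = q a + q b + B a b)
    (x : Fin 3 → V) (y : Fin 3 → V)
    (hpair : ∀ i j : Fin 3, B (x i) (y j) = if i = j then 1 else 0)
    (hxx : ∀ i j : Fin 3, B (x i) (x j) = 0)
    (hyy : ∀ i j : Fin 3, B (y i) (y j) = 0)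
    (hqx1 : q (x 0) = 1) (hqx3 : q (x 2) = 1) (hqx2 : q (x 1) = 0)
    (hqy : ∀ i : Fin 3, q (y i) = 1) :
    e = 48 ∧ σ = -32 ∧
    q (x 0) = 1 ∧ q (y 0) = 1 ∧ q (x 0 + x 1) = 1 ∧ q (y 1) = 1 ∧
    q (x 1 + x 2) = 1 ∧ q (y 2) = 1 ∧ q (x 2) = 1 := by
  refine ⟨by omega, ?_, hqx1, hqy 0, ?_, hqy 1, ?_, hqy 2, hqx3⟩
  · have : ((σ : ℚ)) = -32 := by rw [hσ]; norm_num
    exact_mod_cast this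
  · rw [hq, hqx1, hqx2, hxx 0 1]; decide
  · rw [hq, hqx2, hqx3, hxx 1 2]; decide
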